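/- If a 4-coloured graph Γ contains a cluster-type vertex v, i.e. the four bicoloured cycles through v of types {0,1}, {0,2}, {0,3} and {1,2} (any four distinct pairs) all have length 4 and together involve exactly nine vertices of Γ, then Γ has at least 10 vertices. -/

import Mathlib

/-- An (n+1)-coloured graph: a finite regular multigraph of degree n+1 (no loops)
with an edge-colouring by Δ_n = {0,…,n} injective on adjacent edges. -/
structure CGraph (n : ℕ) where
  V : Type
  E : Type
  [fV : Fintype V]
  [fE : Fintype E]
  [dV : DecidableEq V]
  ends : E → Sym2 V
  noLoop : ∀ e : E, ¬ (ends e).IsDiag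
  col : E → Fin (n + 1)
  regular : ∀ v : V, {e : E | v ∈ ends e}.ncard = n + 1
  proper : ∀ e f : E, e ≠ f → (∃ v : V, v ∈ ends e ∧ v ∈ ends f) → col e ≠ col f

attribute [instance] CGraph.fV CGraph.fE CGraph.dV

namespace CGraph

variable {n : ℕ}

/-- One step along an edge whose colour lies in `S`. -/
def step (G : CGraph n) (S : Set (Fin (n + 1))) (u w : G.V) : Prop :=
  ∃ e : G.E, G.col e ∈ S ∧ G.ends e = s(u, w)

/-- Connectivity by edges whose colours lie in `S`. -/
def reach (G : CGraph n) (S : Set (Fin (n + 1))) : G.V → G.V → Prop :=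
  Relation.ReflTransGen (G.step S)

/-- Number of connected components of the subgraph spanned by edges with colours in `S`. -/
noncomputable def comps (G : CGraph n) (S : Set (Fin (n + 1))) : ℕ :=
  Nat.card (Quot (G.step S))

/-- A graph is bipartite if its vertices admit a 2-colouring with no monochromatic edge. -/
def Bipartite (G : CGraph n) : Prop :=
  ∃ b : G.V → Bool, ∀ e : G.E, ∀ u ∈ G.ends e, ∀ w ∈ G.ends e, u ≠ w → b u ≠ b w

end CGraph

/-! The edges of any one colour form a perfect matching, so every coloured graph has an even
number of vertices. Nine vertices around a cluster-type vertex therefore force a tenth. -/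

theorem Function.Involutive.even_card_of_forall_ne {α : Type*} [Fintype α] [DecidableEq α]
    {f : α → α} (hf : Function.Involutive f) (hne : ∀ x, f x ≠ x) :
    Even (Fintype.card α) := by
  let F : Function.End α := f
  have hsq : F ^ 2 ^ 1 = 1 := funext hf
  have hfix : Fintype.card (Function.fixedPoints F) = 0 :=
    Fintype.card_eq_zero_iff.mpr ⟨fun x => hne x.1 x.2⟩
  have hmod := Equiv.Perm.card_fixedPoints_modEq hsq
  rw [hfix, Nat.modEq_zero_iff_dvd] at hmod
  exact even_iff_two_dvd.mpr hmod

namespace CGraph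

variable {n : ℕ} (G : CGraph n)

theorem injOn_col_incidentEdges (u : G.V) : Set.InjOn G.col {e | u ∈ G.ends e} :=
  fun e he f hf hcol => by_contra fun hne => G.proper e f hne ⟨u, he, hf⟩ hcol

theorem existsUnique_incident_edge_col (u : G.V) (c : Fin (n + 1)) :
    ∃! e, u ∈ G.ends e ∧ G.col e = c := by
  have hcols : G.col '' {e | u ∈ G.ends e} = Set.univ := by
    apply Set.eq_of_subset_of_ncard_le (Set.subset_univ _)
    rw [(G.injOn_col_incidentEdges u).ncard_image, G.regular, Set.ncard_univ,
      Nat.card_eq_fintype_card, Fintype.card_fin]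
  obtain ⟨e, he, rfl⟩ := hcols.ge (Set.mem_univ c)
  exact ⟨e, ⟨he, rfl⟩, fun f hf => G.injOn_col_incidentEdges u hf.1 he hf.2⟩

noncomputable def edgeOfCol (c : Fin (n + 1)) (u : G.V) : G.E :=
  (G.existsUnique_incident_edge_col u c).exists.choose

theorem mem_ends_edgeOfCol (c : Fin (n + 1)) (u : G.V) : u ∈ G.ends (G.edgeOfCol c u) :=
  (G.existsUnique_incident_edge_col u c).exists.choose_spec.1

theorem col_edgeOfCol (c : Fin (n + 1)) (u : G.V) : G.col (G.edgeOfCol c u) = c :=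
  (G.existsUnique_incident_edge_col u c).exists.choose_spec.2

theorem eq_edgeOfCol {c : Fin (n + 1)} {u : G.V} {e : G.E} (hu : u ∈ G.ends e)
    (hc : G.col e = c) : e = G.edgeOfCol c u :=
  (G.existsUnique_incident_edge_col u c).unique ⟨hu, hc⟩
    ⟨G.mem_ends_edgeOfCol c u, G.col_edgeOfCol c u⟩

noncomputable def partner (c : Fin (n + 1)) (u : G.V) : G.V :=
  Sym2.Mem.other' (G.mem_ends_edgeOfCol c u)

theorem ends_edgeOfCol (c : Fin (n + 1)) (u : G.V) :
    G.ends (G.edgeOfCol c u) = s(u, G.partner c u) :=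
  (Sym2.other_spec' _).symm

theorem partner_ne (c : Fin (n + 1)) (u : G.V) : G.partner c u ≠ u := fun h =>
  G.noLoop (G.edgeOfCol c u) (by rw [G.ends_edgeOfCol, h]; rfl)

theorem partner_involutive (c : Fin (n + 1)) : Function.Involutive (G.partner c) := by
  intro u
  have hw : G.partner c u ∈ G.ends (G.edgeOfCol c u) := by
    rw [G.ends_edgeOfCol]; exact Sym2.mem_mk_right _ _
  have hedge := G.eq_edgeOfCol hw (G.col_edgeOfCol c u)
  have hends := G.ends_edgeOfCol c (G.partner c u)
  rw [← hedge, G.ends_edgeOfCol, Sym2.eq_swap] at hends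
  exact (Sym2.congr_right.mp hends).symm

theorem even_card_V : Even (Fintype.card G.V) :=
  (G.partner_involutive 0).even_card_of_forall_ne (G.partner_ne 0)

end CGraph

theorem stmt_18_general (G : CGraph 3) (v : G.V) (S : Finset (Sym2 (Fin 4)))
    (hnine : {w : G.V | ∃ s ∈ S, G.reach {i | i ∈ s} v w}.ncard = 9) :
    10 ≤ Fintype.card G.V := by
  have h9 : 9 ≤ Fintype.card G.V := by
    rw [← hnine, ← Nat.card_eq_fintype_card]
    exact Set.ncard_le_card _
  obtain ⟨r, hr⟩ := G.even_card_V
  omega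

/-- If a 4-coloured graph contains a cluster-type vertex `v` — four
distinct bicoloured cycles through `v`, each of length four (hence with four
vertices), together involving exactly nine vertices — then the graph has at least
10 vertices. -/
theorem stmt_18 (G : CGraph 3) (v : G.V) (S : Finset (Sym2 (Fin 4)))
    (hcard : S.card = 4) (hnd : ∀ s ∈ S, ¬ s.IsDiag)
    (hlen : ∀ s ∈ S, {w : G.V | G.reach {i | i ∈ s} v w}.ncard = 4)
    (hnine : {w : G.V | ∃ s ∈ S, G.reach {i | i ∈ s} v w}.ncard = 9) :
    10 ≤ Fintype.card G.V :=
  stmt_18_general G v S hnine
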